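/- arXiv:1004.4621 — 3 statements merged into one kernel-verified Lean document; each statement's English description precedes it below -/
import Mathlib

section
/- Let X be a Banach space, A : X → X bounded with ‖A‖ ≤ M, and suppose e ∈ C²([0,T]; X) solves e''(t) = A e(t) + d(t) with e(0) = 0, e'(0) = 0, where d ∈ C([0,T]; X). Then for all t ∈ [0,T], ‖e(t)‖ ≤ ∫₀ᵗ (sinh(√M (t−τ))/√M) ‖d(τ)‖ dτ. -/
/-!
Taylor's formula with integral remainder turns the equation into
`e t = ∫₀ᵗ (t - τ) • (A (e τ) + d τ) dτ`, so `φ = ‖e‖` satisfies the Volterra inequality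
`φ t ≤ ∫₀ᵗ (t - τ) (M φ τ + ‖d τ‖) dτ`. The comparison function
`w t = ∫₀ᵗ sinh (√M (t - τ)) / √M · ‖d τ‖ dτ` solves `w'' = M w + ‖d‖` with zero initial data,
hence the corresponding Volterra equation. The difference `φ - w` then satisfies a homogeneous
Volterra inequality with nonnegative kernel; on `[0, T]` the kernel is at most `M T`, and
Grönwall's lemma applied to the primitive of the positive part of `φ - w` gives `φ ≤ w`.
-/

open MeasureTheory Real intervalIntegral Set Topology

section VectorValued

variable {E : Type*} [NormedAddCommGroup E] [NormedSpace ℝ E] [CompleteSpace E]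

theorem taylor_integral_remainder_one_of_hasDerivWithinAt {u v f : ℝ → E} {a b : ℝ}
    (hu : ∀ x ∈ uIcc a b, HasDerivWithinAt u (v x) (uIcc a b) x)
    (hv : ∀ x ∈ uIcc a b, HasDerivWithinAt v (f x) (uIcc a b) x)
    (hf : ContinuousOn f (uIcc a b)) :
    ∫ x in a..b, (b - x) • f x = u b - u a - (b - a) • v a := by
  have hH : ∀ x ∈ uIcc a b,
      HasDerivWithinAt (fun x => u x + (b - x) • v x) ((b - x) • f x) (uIcc a b) x := by
    intro x hx
    convert (hu x hx).add (((hasDerivWithinAt_id x _).const_sub b).smul (hv x hx)) using 1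
    · rfl
    · simp
  rw [integral_eq_sub_of_hasDeriv_right (fun x hx => (hH x hx).continuousWithinAt)
    (fun x hx => ((hH x (Ioo_subset_Icc_self hx)).hasDerivAt
      (Icc_mem_nhds hx.1 hx.2)).hasDerivWithinAt)
    ((continuousOn_const.sub continuousOn_id).smul hf).intervalIntegrable]
  simp only [sub_self, zero_smul, add_zero]
  abel

theorem hasDerivWithinAt_integral_Ici {f : ℝ → E} {a b x : ℝ} (hf : ContinuousOn f (Icc a b))
    (hx : x ∈ Ico a b) : HasDerivWithinAt (fun t => ∫ τ in a..t, f τ) (f x) (Ici x) x := by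
  have hmem : Icc a b ∈ 𝓝[>] x := Icc_mem_nhdsGT_of_mem hx
  exact integral_hasDerivWithinAt_right
    ((hf.mono (Icc_subset_Icc le_rfl hx.2.le)).intervalIntegrable_of_Icc hx.1)
    ((hf.stronglyMeasurableAtFilter_nhdsWithin measurableSet_Icc x).filter_mono
      (nhdsWithin_le_of_mem hmem))
    ((hf x (Ico_subset_Icc_self hx)).mono_of_mem_nhdsWithin hmem)

end VectorValued

noncomputable def sinhConvolution (s : ℝ) (ρ : ℝ → ℝ) (t : ℝ) : ℝ :=
  ∫ τ in (0:ℝ)..t, sinh (s * (t - τ)) / s * ρ τ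

noncomputable def coshConvolution (s : ℝ) (ρ : ℝ → ℝ) (t : ℝ) : ℝ :=
  ∫ τ in (0:ℝ)..t, cosh (s * (t - τ)) * ρ τ

section Convolution

variable {s : ℝ} {ρ : ℝ → ℝ}

theorem sinhConvolution_eq (hρ : Continuous ρ) (t : ℝ) :
    sinhConvolution s ρ t = sinh (s * t) / s * (∫ τ in (0:ℝ)..t, cosh (s * τ) * ρ τ)
      - cosh (s * t) / s * ∫ τ in (0:ℝ)..t, sinh (s * τ) * ρ τ := by
  rw [sinhConvolution, ← intervalIntegral.integral_const_mul (sinh (s * t) / s),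
    ← intervalIntegral.integral_const_mul (cosh (s * t) / s), ← intervalIntegral.integral_sub
    (by apply Continuous.intervalIntegrable; fun_prop)
    (by apply Continuous.intervalIntegrable; fun_prop)]
  refine integral_congr fun τ _ => ?_
  simp only [mul_sub, sinh_sub]
  ring

theorem coshConvolution_eq (hρ : Continuous ρ) (t : ℝ) :
    coshConvolution s ρ t = cosh (s * t) * (∫ τ in (0:ℝ)..t, cosh (s * τ) * ρ τ)
      - sinh (s * t) * ∫ τ in (0:ℝ)..t, sinh (s * τ) * ρ τ := by
  rw [coshConvolution, ← intervalIntegral.integral_const_mul (cosh (s * t)),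
    ← intervalIntegral.integral_const_mul (sinh (s * t)), ← intervalIntegral.integral_sub
    (by apply Continuous.intervalIntegrable; fun_prop)
    (by apply Continuous.intervalIntegrable; fun_prop)]
  refine integral_congr fun τ _ => ?_
  simp only [mul_sub, cosh_sub]
  ring

theorem hasDerivAt_integral_comp_mul_mul {k : ℝ → ℝ} (hk : Continuous k) (hρ : Continuous ρ)
    (t : ℝ) : HasDerivAt (fun t => ∫ τ in (0:ℝ)..t, k (s * τ) * ρ τ) (k (s * t) * ρ t) t :=
  ((by fun_prop : Continuous fun τ => k (s * τ) * ρ τ).integral_hasStrictDerivAt 0 t).hasDerivAt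

theorem hasDerivAt_sinhConvolution (hs : s ≠ 0) (hρ : Continuous ρ) (t : ℝ) :
    HasDerivAt (sinhConvolution s ρ) (coshConvolution s ρ t) t := by
  have hst : HasDerivAt (fun t => s * t) s t := by simpa using (hasDerivAt_id t).const_mul s
  have hP := hasDerivAt_integral_comp_mul_mul continuous_cosh hρ (s := s) t
  have hQ := hasDerivAt_integral_comp_mul_mul continuous_sinh hρ (s := s) t
  rw [funext (sinhConvolution_eq hρ), coshConvolution_eq hρ]
  refine (((hst.sinh.div_const s).fun_mul hP).fun_sub
    ((hst.cosh.div_const s).fun_mul hQ)).congr_deriv ?_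
  field_simp
  ring

theorem hasDerivAt_coshConvolution (hρ : Continuous ρ) (t : ℝ) :
    HasDerivAt (coshConvolution s ρ) (s ^ 2 * sinhConvolution s ρ t + ρ t) t := by
  have hst : HasDerivAt (fun t => s * t) s t := by simpa using (hasDerivAt_id t).const_mul s
  have hP := hasDerivAt_integral_comp_mul_mul continuous_cosh hρ (s := s) t
  have hQ := hasDerivAt_integral_comp_mul_mul continuous_sinh hρ (s := s) t
  rw [funext (coshConvolution_eq hρ), sinhConvolution_eq hρ]
  refine ((hst.cosh.fun_mul hP).fun_sub (hst.sinh.fun_mul hQ)).congr_deriv ?_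
  field_simp
  linear_combination ρ t * cosh_sq_sub_sinh_sq (s * t)

theorem continuous_sinhConvolution (hs : s ≠ 0) (hρ : Continuous ρ) :
    Continuous (sinhConvolution s ρ) :=
  continuous_iff_continuousAt.2 fun t => (hasDerivAt_sinhConvolution hs hρ t).continuousAt

theorem sinhConvolution_eq_integral (hs : s ≠ 0) (hρ : Continuous ρ) (t : ℝ) :
    sinhConvolution s ρ t = ∫ τ in (0:ℝ)..t, (t - τ) * (s ^ 2 * sinhConvolution s ρ τ + ρ τ) := by
  have hw := continuous_sinhConvolution hs hρ
  have h := taylor_integral_remainder_one_of_hasDerivWithinAt (a := 0) (b := t)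
    (fun x _ => (hasDerivAt_sinhConvolution hs hρ x).hasDerivWithinAt)
    (fun x _ => (hasDerivAt_coshConvolution hρ x).hasDerivWithinAt)
    (by fun_prop : Continuous fun x => s ^ 2 * sinhConvolution s ρ x + ρ x).continuousOn
  rw [show sinhConvolution s ρ 0 = 0 from integral_same,
    show coshConvolution s ρ 0 = 0 from integral_same] at h
  simpa using h.symm

end Convolution

section Volterra

variable {a b M : ℝ}

theorem nonpos_of_le_integral_sub_mul {g : ℝ → ℝ} (hM : 0 ≤ M) (hg : ContinuousOn g (Icc a b))
    (hle : ∀ t ∈ Icc a b, g t ≤ ∫ τ in a..t, (t - τ) * (M * g τ)) :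
    ∀ t ∈ Icc a b, g t ≤ 0 := by
  intro t ht
  have hK : 0 ≤ M * (b - a) := mul_nonneg hM (sub_nonneg.2 (ht.1.trans ht.2))
  set h : ℝ → ℝ := fun τ => max (g τ) 0
  have hh : ContinuousOn h (Icc a b) := hg.sup continuousOn_const
  have hbound : ∀ t ∈ Icc a b, h t ≤ M * (b - a) * ∫ τ in a..t, h τ := by
    intro t ht
    have hsub : Icc a t ⊆ Icc a b := Icc_subset_Icc le_rfl ht.2
    refine max_le ((hle t ht).trans ?_)
      (mul_nonneg hK (integral_nonneg ht.1 fun τ _ => le_max_right (g τ) 0))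
    rw [← intervalIntegral.integral_const_mul]
    refine integral_mono_on ht.1
      (((by fun_prop : Continuous fun τ : ℝ => t - τ).continuousOn.mul
        (continuousOn_const.mul (hg.mono hsub))).intervalIntegrable_of_Icc ht.1)
      ((continuousOn_const.mul (hh.mono hsub)).intervalIntegrable_of_Icc ht.1) fun τ hτ => ?_
    have hτt : 0 ≤ t - τ := sub_nonneg.2 hτ.2
    calc (t - τ) * (M * g τ) ≤ (t - τ) * (M * h τ) := by gcongr; exact le_max_left _ _
      _ ≤ (b - a) * (M * h τ) := by
        gcongr
        exacts [ht.2, hτ.1]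
      _ = M * (b - a) * h τ := by ring
  have hF : ∀ x ∈ Icc a b, ∫ τ in a..x, h τ = 0 := by
    refine eq_zero_of_abs_deriv_le_mul_abs_self_of_eq_zero_right (K := M * (b - a)) ?_
      (fun x hx => hasDerivWithinAt_integral_Ici hh hx) integral_same fun x hx => ?_
    · have hab : a ≤ b := ht.1.trans ht.2
      have := continuousOn_primitive_interval (μ := volume) (a := a) (b := b) (f := h)
        (by rw [uIcc_of_le hab]; exact hh.integrableOn_Icc)
      rwa [uIcc_of_le hab] at this
    · rw [norm_of_nonneg (le_max_right _ _)]
      exact (hbound x (Ico_subset_Icc_self hx)).trans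
        (mul_le_mul_of_nonneg_left (le_norm_self _) hK)
  calc g t ≤ h t := le_max_left _ _
    _ ≤ M * (b - a) * ∫ τ in a..t, h τ := hbound t ht
    _ = 0 := by rw [hF t ht, mul_zero]

theorem le_of_le_integral_of_eq_integral {φ w ρ : ℝ → ℝ} (hM : 0 ≤ M)
    (hφ : ContinuousOn φ (Icc a b)) (hw : ContinuousOn w (Icc a b)) (hρ : ContinuousOn ρ (Icc a b))
    (hφle : ∀ t ∈ Icc a b, φ t ≤ ∫ τ in a..t, (t - τ) * (M * φ τ + ρ τ))
    (hweq : ∀ t ∈ Icc a b, w t = ∫ τ in a..t, (t - τ) * (M * w τ + ρ τ)) :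
    ∀ t ∈ Icc a b, φ t ≤ w t := by
  refine fun t ht => sub_nonpos.1
    (nonpos_of_le_integral_sub_mul hM (hφ.sub hw) (fun t ht => ?_) t ht)
  have hsub : Icc a t ⊆ Icc a b := Icc_subset_Icc le_rfl ht.2
  have hint : ∀ u : ℝ → ℝ, ContinuousOn u (Icc a b) →
      IntervalIntegrable (fun τ => (t - τ) * (M * u τ + ρ τ)) volume a t := fun u hu =>
    ((by fun_prop : Continuous fun τ : ℝ => t - τ).continuousOn.mul
      ((continuousOn_const.mul (hu.mono hsub)).add (hρ.mono hsub))).intervalIntegrable_of_Icc ht.1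
  calc φ t - w t ≤ (∫ τ in a..t, (t - τ) * (M * φ τ + ρ τ))
        - ∫ τ in a..t, (t - τ) * (M * w τ + ρ τ) := by rw [← hweq t ht]; linarith [hφle t ht]
    _ = ∫ τ in a..t, (t - τ) * (M * (φ τ - w τ)) := by
      rw [← intervalIntegral.integral_sub (hint φ hφ) (hint w hw)]
      congr 1 with τ
      ring

end Volterra

theorem norm_le_integral_of_hasDerivWithinAt_second {E : Type*} [NormedAddCommGroup E]
    [NormedSpace ℝ E] [CompleteSpace E] (A : E →L[ℝ] E) {M a b : ℝ} (hA : ‖A‖ ≤ M)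
    {e e' d : ℝ → E} {ρ : ℝ → ℝ} (hd : ContinuousOn d (Icc a b))
    (he : ∀ t ∈ Icc a b, HasDerivWithinAt e (e' t) (Icc a b) t)
    (he' : ∀ t ∈ Icc a b, HasDerivWithinAt e' (A (e t) + d t) (Icc a b) t)
    (h0 : e a = 0) (h0' : e' a = 0) (hρ : ContinuousOn ρ (Icc a b))
    (hdρ : ∀ τ ∈ Icc a b, ‖d τ‖ ≤ ρ τ) :
    ∀ t ∈ Icc a b, ‖e t‖ ≤ ∫ τ in a..t, (t - τ) * (M * ‖e τ‖ + ρ τ) := by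
  intro t ht
  have hsub : uIcc a t ⊆ Icc a b := by rw [uIcc_of_le ht.1]; exact Icc_subset_Icc le_rfl ht.2
  have hec : ContinuousOn e (Icc a b) := fun x hx => (he x hx).continuousWithinAt
  have hf : ContinuousOn (fun τ => A (e τ) + d τ) (Icc a b) :=
    (A.continuous.comp_continuousOn hec).add hd
  have hrepr := taylor_integral_remainder_one_of_hasDerivWithinAt
    (fun x hx => (he x (hsub hx)).mono hsub) (fun x hx => (he' x (hsub hx)).mono hsub)
    (hf.mono hsub)
  rw [h0, h0', smul_zero, sub_zero, sub_zero] at hrepr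
  rw [← hrepr]
  refine (intervalIntegral.norm_integral_le_integral_norm ht.1).trans
    (integral_mono_on ht.1 ?_ ?_ fun τ hτ => ?_)
  · exact ((continuousOn_const.sub continuousOn_id).smul (hf.mono hsub)).norm.intervalIntegrable
  · exact ((continuousOn_const.sub continuousOn_id).mul
      ((continuousOn_const.mul (hec.mono hsub).norm).add (hρ.mono hsub))).intervalIntegrable
  have hτ' : τ ∈ Icc a b := hsub (Icc_subset_uIcc hτ)
  rw [norm_smul, norm_of_nonneg (sub_nonneg.2 hτ.2)]
  gcongr
  · exact sub_nonneg.2 hτ.2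
  exact (norm_add_le _ _).trans (add_le_add (A.le_of_opNorm_le hA _) (hdρ τ hτ'))

/-- Error estimate for the second-order problem `e'' = A e + d` with zero initial data:
`‖e(t)‖ ≤ ∫₀ᵗ sinh(√M (t−τ))/√M · ‖d(τ)‖ dτ` when `‖A‖ ≤ M`. -/
theorem stmt7 {X : Type*} [NormedAddCommGroup X] [NormedSpace ℝ X] [CompleteSpace X]
    (A : X →L[ℝ] X) (M T : ℝ) (hM : 0 < M) (hA : ‖A‖ ≤ M) (hT : 0 ≤ T)
    (e e' d : ℝ → X) (hd : ContinuousOn d (Set.Icc 0 T))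
    (he : ∀ t ∈ Set.Icc 0 T, HasDerivWithinAt e (e' t) (Set.Icc 0 T) t)
    (he' : ∀ t ∈ Set.Icc 0 T, HasDerivWithinAt e' (A (e t) + d t) (Set.Icc 0 T) t)
    (h0 : e 0 = 0) (h0' : e' 0 = 0) :
    ∀ t ∈ Set.Icc 0 T,
      ‖e t‖ ≤ ∫ τ in (0:ℝ)..t, Real.sinh (Real.sqrt M * (t - τ)) / Real.sqrt M * ‖d τ‖ := by
  intro t ht
  have hs : √M ≠ 0 := (sqrt_pos.2 hM).ne'
  -- `‖d‖` extended continuously to `ℝ`, so that the comparison function is differentiable on `ℝ`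
  set ρ : ℝ → ℝ := fun τ => ‖d (projIcc 0 T hT τ)‖
  have hρ : Continuous ρ :=
    (hd.comp_continuous (continuous_subtype_val.comp continuous_projIcc)
      fun τ => (projIcc 0 T hT τ).2).norm
  have hρd : ∀ τ ∈ Icc 0 T, ρ τ = ‖d τ‖ := fun τ hτ => by simp [ρ, projIcc_of_mem hT hτ]
  have hle := le_of_le_integral_of_eq_integral hM.le
    (fun x hx => (he x hx).continuousWithinAt.norm) (continuous_sinhConvolution hs hρ).continuousOn
    hρ.continuousOn
    (norm_le_integral_of_hasDerivWithinAt_second A hA hd he he' h0 h0' hρ.continuousOn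
      fun τ hτ => (hρd τ hτ).ge)
    (fun τ _ => by simpa [sq_sqrt hM.le] using sinhConvolution_eq_integral hs hρ τ) t ht
  refine hle.trans_eq (integral_congr fun τ hτ => ?_)
  rw [uIcc_of_le ht.1] at hτ
  simp only [hρd τ ⟨hτ.1, hτ.2.trans ht.2⟩]
end

section
/- Let Ω ⊂ ℝⁿ be bounded and measurable, Y = [0,1)ⁿ, 1 ≤ p < ∞, and ψ ∈ C_c(ℝⁿ × ℝⁿ) with ψ(x, ·) Y-periodic for each x. Then lim_{ε→0} ∫_Ω |ψ(x, x/ε)|^p dx = ∫_Ω ∫_Y |ψ(x,y)|^p dy dx. -/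
/-!
Average over the cell. For fixed `ε`, translation invariance of Lebesgue measure gives
`|Y| ∫ w(x) g(x, x/ε) dx = ∫_Y ∫ w(x + εt) g(x + εt, x/ε + t) dx dt`, while periodicity and
Fubini give `∫ w(x) ∫_Y g(x, y) dy dx = ∫_Y ∫ w(x) g(x, x/ε + t) dx dt`. The two inner
integrands differ only by the shift `εt` of the slow variable, which is uniformly small for
`t ∈ Y`; it is controlled by the uniform continuity of `g` in its first variable and the
continuity of translation in `L¹`. The theorem is the case `w = 1_Ω`, `g = |ψ|^p`.
-/

open MeasureTheory Filter Topology Function Bornology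

section TranslationContinuity

variable {G F : Type*} [NormedAddCommGroup G] [ProperSpace G] [MeasurableSpace G] [BorelSpace G]
  [NormedAddCommGroup F] {μ : Measure G}

theorem HasCompactSupport.tendsto_integral_norm_comp_add_sub [IsFiniteMeasureOnCompacts μ]
    {u : G → F} (hu : HasCompactSupport u) (hc : Continuous u) :
    Tendsto (fun s => ∫ x, ‖u (x + s) - u x‖ ∂μ) (𝓝 0) (𝓝 0) := by
  obtain ⟨C, hC⟩ := hc.bounded_above_of_compact_support hu
  set K := Metric.cthickening 1 (tsupport u)
  have hK : IsCompact K := hu.cthickening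
  have h_vanish : ∀ s : G, ‖s‖ ≤ 1 → ∀ x ∉ K, u (x + s) = 0 := fun s hs x hx =>
    image_eq_zero_of_notMem_tsupport fun h =>
      hx (Metric.mem_cthickening_of_dist_le x (x + s) 1 _ h (by simpa [dist_eq_norm] using hs))
  have h_bound : ∀ s ∈ Metric.closedBall (0 : G) 1, ∀ x,
      ‖‖u (x + s) - u x‖‖ ≤ K.indicator (fun _ => 2 * C) x := by
    intro s hs x
    rw [mem_closedBall_zero_iff] at hs
    by_cases hx : x ∈ K
    · rw [Set.indicator_of_mem hx, norm_norm, two_mul]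
      exact (norm_sub_le _ _).trans (add_le_add (hC _) (hC _))
    · have hx0 : u x = 0 :=
        image_eq_zero_of_notMem_tsupport fun h => hx (Metric.self_subset_cthickening _ h)
      simp [Set.indicator_of_notMem hx, h_vanish s hs x hx, hx0]
  have h_lim : ∀ x, Tendsto (fun s => ‖u (x + s) - u x‖) (𝓝 0) (𝓝 0) := fun x => by
    simpa using
      (((hc.comp (continuous_const_add x)).tendsto' 0 (u x) (by simp)).sub_const (u x)).norm
  simpa using tendsto_integral_filter_of_dominated_convergence (μ := μ) _
    (Eventually.of_forall fun s =>
      ((hc.comp (continuous_add_const s)).sub hc).norm.aestronglyMeasurable)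
    (eventually_of_mem (Metric.closedBall_mem_nhds 0 one_pos) fun s hs =>
      Eventually.of_forall (h_bound s hs))
    ((integrableOn_const hK.measure_lt_top.ne).integrable_indicator hK.measurableSet)
    (Eventually.of_forall h_lim)

theorem MeasureTheory.Integrable.tendsto_integral_norm_comp_add_sub [NormedSpace ℝ F]
    [μ.IsAddRightInvariant] [μ.Regular] {f : G → F} (hf : Integrable f μ) :
    Tendsto (fun s => ∫ x, ‖f (x + s) - f x‖ ∂μ) (𝓝 0) (𝓝 0) := by
  rw [Metric.tendsto_nhds]
  intro η hη
  obtain ⟨u, hu, hfu, hc, hui⟩ :=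
    hf.exists_hasCompactSupport_integral_sub_le (by positivity : 0 < η / 3)
  filter_upwards [Metric.tendsto_nhds.1 (hu.tendsto_integral_norm_comp_add_sub (μ := μ) hc)
    (η / 3) (by positivity)] with s hs
  rw [Real.dist_eq, sub_zero, abs_of_nonneg (integral_nonneg fun _ => norm_nonneg _)] at hs ⊢
  have hf_s := hf.comp_add_right s
  have hu_s := hui.comp_add_right s
  have h₁ : Integrable (fun x => ‖f (x + s) - u (x + s)‖) μ := (hf_s.sub hu_s).norm
  have h₂ : Integrable (fun x => ‖u (x + s) - u x‖) μ := (hu_s.sub hui).norm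
  have h₃ : Integrable (fun x => ‖f x - u x‖) μ := (hf.sub hui).norm
  have h_tri : ∀ x, ‖f (x + s) - f x‖ ≤
      ‖f (x + s) - u (x + s)‖ + ‖u (x + s) - u x‖ + ‖f x - u x‖ := fun x => by
    have h₁ := norm_sub_le_norm_sub_add_norm_sub (f (x + s)) (u (x + s)) (f x)
    have h₂ := norm_sub_le_norm_sub_add_norm_sub (u (x + s)) (u x) (f x)
    rw [norm_sub_rev (u x)] at h₂
    linarith
  have h_shift : ∫ x, ‖f (x + s) - u (x + s)‖ ∂μ = ∫ x, ‖f x - u x‖ ∂μ :=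
    integral_add_right_eq_self (fun x => ‖f x - u x‖) s
  calc ∫ x, ‖f (x + s) - f x‖ ∂μ
      ≤ ∫ x, (‖f (x + s) - u (x + s)‖ + ‖u (x + s) - u x‖ + ‖f x - u x‖) ∂μ :=
        integral_mono (hf_s.sub hf).norm ((h₁.add h₂).add h₃) h_tri
    _ = ∫ x, ‖f (x + s) - u (x + s)‖ ∂μ + ∫ x, ‖u (x + s) - u x‖ ∂μ +
          ∫ x, ‖f x - u x‖ ∂μ := by
        rw [← integral_add h₁ h₂]
        exact integral_add (h₁.add h₂) h₃
    _ < η := by linarith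

end TranslationContinuity

section CompactRepresentatives

variable {X Z F : Type*} [MetricSpace X] [MetricSpace Z] [NormedAddCommGroup F]
  {g : X → Z → F} {K : Set X} {C : Set Z}

theorem hasCompactSupport_uncurry_restrict (hK : IsCompact K) (hC : IsCompact C)
    (hgK : ∀ x ∉ K, ∀ y, g x y = 0) :
    HasCompactSupport fun p : X × C => g p.1 p.2 := by
  have := isCompact_iff_compactSpace.mp hC
  exact HasCompactSupport.intro (hK.prod isCompact_univ) fun p hp =>
    hgK p.1 (fun h => hp ⟨h, trivial⟩) p.2

theorem exists_forall_norm_le_of_compact_reps (hg : Continuous (uncurry g))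
    (hK : IsCompact K) (hC : IsCompact C) (hgK : ∀ x ∉ K, ∀ y, g x y = 0)
    (hrep : ∀ y, ∃ y' ∈ C, ∀ x, g x y = g x y') :
    ∃ M, ∀ x y, ‖g x y‖ ≤ M := by
  obtain ⟨M, hM⟩ :=
    (hg.comp (continuous_fst.prodMk (continuous_subtype_val.comp continuous_snd))
      ).bounded_above_of_compact_support (hasCompactSupport_uncurry_restrict hK hC hgK)
  refine ⟨M, fun x y => ?_⟩
  obtain ⟨y', hy', hyy'⟩ := hrep y
  simpa [hyy'] using hM (x, ⟨y', hy'⟩)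

theorem uniformEquicontinuous_flip_of_compact_reps (hg : Continuous (uncurry g))
    (hK : IsCompact K) (hC : IsCompact C) (hgK : ∀ x ∉ K, ∀ y, g x y = 0)
    (hrep : ∀ y, ∃ y' ∈ C, ∀ x, g x y = g x y') :
    UniformEquicontinuous (flip g) := by
  have huc := Metric.uniformContinuous_iff.mp <|
    (hasCompactSupport_uncurry_restrict hK hC hgK).uniformContinuous_of_continuous
      (hg.comp (continuous_fst.prodMk (continuous_subtype_val.comp continuous_snd)))
  rw [Metric.uniformEquicontinuous_iff]
  intro η hη
  obtain ⟨δ, hδ, hδη⟩ := huc η hη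
  refine ⟨δ, hδ, fun x x' hxx' y => ?_⟩
  obtain ⟨y', hy', hyy'⟩ := hrep y
  have : dist ((x, ⟨y', hy'⟩) : X × C) (x', ⟨y', hy'⟩) < δ := by
    simpa [Prod.dist_eq] using hxx'
  simpa [flip, hyy'] using hδη this

end CompactRepresentatives

theorem MeasureTheory.Integrable.mul_comp_of_norm_le {α Z : Type*} [MeasurableSpace α]
    [MeasurableSpace Z] {μ : Measure α} {w : α → ℝ} {g : α → Z → ℝ} {M : ℝ}
    (hw : Integrable w μ) (hgm : Measurable (uncurry g)) (hgM : ∀ x y, ‖g x y‖ ≤ M)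
    {h : α → Z} (hh : Measurable h) :
    Integrable (fun x => w x * g x (h x)) μ :=
  hw.mul_bdd (hgm.comp (measurable_id.prodMk hh)).aestronglyMeasurable
    (Eventually.of_forall fun x => hgM x (h x))

theorem MeasureTheory.integral_indicator_one_mul {α : Type*} [MeasurableSpace α] {μ : Measure α}
    {s : Set α} (hs : MeasurableSet s) (f : α → ℝ) :
    ∫ x, s.indicator 1 x * f x ∂μ = ∫ x in s, f x ∂μ := by
  simp_rw [← Set.indicator_mul_left, Pi.one_apply, one_mul]
  exact integral_indicator hs

theorem norm_integral_mul_comp_add_sub_le {G Z : Type*} [AddGroup G] [MeasurableSpace G]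
    [MeasurableAdd G] [MeasurableSpace Z] {μ : Measure G} [μ.IsAddRightInvariant] {w : G → ℝ}
    {g : G → Z → ℝ} {M : ℝ} (hw : Integrable w μ) (hgm : Measurable (uncurry g))
    (hgM : ∀ x y, ‖g x y‖ ≤ M) {h : G → Z} (hh : Measurable h) {s : G} {η : ℝ}
    (hs : ∀ x y, ‖g (x + s) y - g x y‖ ≤ η) :
    ‖∫ x, w (x + s) * g (x + s) (h x) ∂μ - ∫ x, w x * g x (h x) ∂μ‖ ≤
      η * ∫ x, ‖w x‖ ∂μ + M * ∫ x, ‖w (x + s) - w x‖ ∂μ := by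
  have hw_s := hw.comp_add_right s
  have hgm_s : Measurable (uncurry fun x y => g (x + s) y) :=
    hgm.comp ((measurable_fst.add_const s).prodMk measurable_snd)
  have h_pt : ∀ x, ‖w (x + s) * g (x + s) (h x) - w x * g x (h x)‖ ≤
      η * ‖w (x + s)‖ + M * ‖w (x + s) - w x‖ := fun x => by
    rw [show w (x + s) * g (x + s) (h x) - w x * g x (h x) =
      w (x + s) * (g (x + s) (h x) - g x (h x)) + (w (x + s) - w x) * g x (h x) by ring]
    refine (norm_add_le _ _).trans (add_le_add ?_ ?_) <;> rw [norm_mul]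
    · rw [mul_comm η]; exact mul_le_mul_of_nonneg_left (hs _ _) (norm_nonneg _)
    · rw [mul_comm M]; exact mul_le_mul_of_nonneg_left (hgM _ _) (norm_nonneg _)
  have h₁ : Integrable (fun x => η * ‖w (x + s)‖) μ := hw_s.norm.const_mul η
  have h₂ : Integrable (fun x => M * ‖w (x + s) - w x‖) μ := (hw_s.sub hw).norm.const_mul M
  calc _ = ‖∫ x, (w (x + s) * g (x + s) (h x) - w x * g x (h x)) ∂μ‖ := by
        rw [integral_sub (hw_s.mul_comp_of_norm_le hgm_s (fun x y => hgM _ y) hh)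
          (hw.mul_comp_of_norm_le hgm hgM hh)]
    _ ≤ ∫ x, (η * ‖w (x + s)‖ + M * ‖w (x + s) - w x‖) ∂μ :=
        norm_integral_le_of_norm_le (h₁.add h₂) (Eventually.of_forall h_pt)
    _ = _ := by
        rw [integral_add h₁ h₂, integral_const_mul, integral_const_mul,
          integral_add_right_eq_self (fun x => ‖w x‖) s]

section Periodic

variable {E : Type*} [AddCommGroup E] [MeasurableSpace E] [MeasurableAdd₂ E] {μ : Measure E}
  {Λ : AddSubgroup E} [Countable Λ] {Y : Set E} {w : E → ℝ} {g : E → E → ℝ} {M : ℝ}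

theorem MeasureTheory.IsAddFundamentalDomain.setIntegral_comp_const_add {F : Type*}
    [NormedAddCommGroup F] [NormedSpace ℝ F] [μ.IsAddLeftInvariant]
    (hY : IsAddFundamentalDomain Λ Y μ) {f : E → F} (hf : ∀ v ∈ Λ, ∀ y, f (v + y) = f y)
    (c : E) :
    ∫ t in Y, f (c + t) ∂μ = ∫ y in Y, f y ∂μ := by
  rw [← (measurePreserving_add_left μ c).setIntegral_image_emb
    (measurableEmbedding_addLeft c)]
  exact (hY.vadd_of_comm c).setIntegral_eq hY fun v y => hf v v.2 y

theorem integrable_prod_mul_comp_add (hYfin : μ Y ≠ ⊤) (hw : Integrable w μ)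
    (hgm : Measurable (uncurry g)) (hgM : ∀ x y, ‖g x y‖ ≤ M) {h : E → E} (hh : Measurable h) :
    Integrable (uncurry fun x t => w x * g x (h x + t)) (μ.prod (μ.restrict Y)) := by
  have : IsFiniteMeasure (μ.restrict Y) := ⟨by simpa using hYfin.lt_top⟩
  exact (hw.comp_fst (μ.restrict Y)).mul_bdd
    (hgm.comp (measurable_fst.prodMk ((hh.comp measurable_fst).add measurable_snd))
      ).aestronglyMeasurable
    (Eventually.of_forall fun z => hgM _ _)

theorem MeasureTheory.IsAddFundamentalDomain.setIntegral_integral_mul_comp_add [SFinite μ]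
    [μ.IsAddLeftInvariant] (hY : IsAddFundamentalDomain Λ Y μ) (hYfin : μ Y ≠ ⊤)
    (hw : Integrable w μ) (hgm : Measurable (uncurry g)) (hgM : ∀ x y, ‖g x y‖ ≤ M)
    (hper : ∀ v ∈ Λ, ∀ x y, g x (v + y) = g x y) {h : E → E} (hh : Measurable h) :
    ∫ t in Y, ∫ x, w x * g x (h x + t) ∂μ ∂μ = ∫ x, w x * ∫ y in Y, g x y ∂μ ∂μ := by
  rw [← integral_integral_swap (integrable_prod_mul_comp_add hYfin hw hgm hgM hh)]
  congr 1 with x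
  rw [integral_const_mul, hY.setIntegral_comp_const_add (fun v hv y => hper v hv x y) (h x)]

end Periodic

theorem Bornology.IsBounded.eventually_forall_smul {E : Type*} [NormedAddCommGroup E]
    [NormedSpace ℝ E] {Y : Set E} (hY : IsBounded Y) {P : E → Prop} (hP : ∀ᶠ s in 𝓝 0, P s) :
    ∀ᶠ ε in 𝓝 (0 : ℝ), ∀ t ∈ Y, P (ε • t) :=
  (((NormedSpace.isVonNBounded_iff ℝ).2 hY).tendsto_smallSets_nhds.eventually
    (eventually_smallSets_forall.2 hP)).mono fun _ hε _ ht => hε _ (Set.smul_mem_smul_set ht)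

section Homogenization

variable {E : Type*} [NormedAddCommGroup E] [NormedSpace ℝ E] [FiniteDimensional ℝ E]
  [MeasurableSpace E] [BorelSpace E] {μ : Measure E} [μ.IsAddHaarMeasure]
  {Λ : AddSubgroup E} [Countable Λ] {Y : Set E} {w : E → ℝ} {g : E → E → ℝ} {M : ℝ}

theorem dist_measureReal_mul_integral_mul_comp_inv_smul_le (hY : IsAddFundamentalDomain Λ Y μ)
    (hYfin : μ Y ≠ ⊤) (hw : Integrable w μ) (hgm : Measurable (uncurry g))
    (hgM : ∀ x y, ‖g x y‖ ≤ M) (hper : ∀ v ∈ Λ, ∀ x y, g x (v + y) = g x y)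
    {ε η : ℝ} (hε : ε ≠ 0)
    (hεY : ∀ t ∈ Y, (∀ x y, ‖g (x + ε • t) y - g x y‖ ≤ η) ∧
      ∫ x, ‖w (x + ε • t) - w x‖ ∂μ ≤ η) :
    dist (μ.real Y * ∫ x, w x * g x (ε⁻¹ • x) ∂μ) (∫ x, w x * ∫ y in Y, g x y ∂μ ∂μ) ≤
      (η * ∫ x, ‖w x‖ ∂μ + M * η) * μ.real Y := by
  set F := ∫ x, w x * g x (ε⁻¹ • x) ∂μ
  have hh : Measurable fun x : E => ε⁻¹ • x := measurable_const_smul ε⁻¹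
  have hF : ∀ t, ∫ x, w (x + ε • t) * g (x + ε • t) (ε⁻¹ • x + t) ∂μ = F := fun t => by
    have h_shift : ∀ x, ε⁻¹ • x + t = ε⁻¹ • (x + ε • t) := fun x => by
      rw [smul_add, smul_smul, inv_mul_cancel₀ hε, one_smul]
    simp_rw [h_shift]
    exact integral_add_right_eq_self (fun x => w x * g x (ε⁻¹ • x)) (ε • t)
  have hF_int : Integrable (fun _ => F) (μ.restrict Y) := integrableOn_const hYfin
  have hB_int : IntegrableOn (fun t => ∫ x, w x * g x (ε⁻¹ • x + t) ∂μ) Y μ :=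
    (integrable_prod_mul_comp_add hYfin hw hgm hgM hh).integral_prod_right
  rw [dist_eq_norm, ← hY.setIntegral_integral_mul_comp_add hYfin hw hgm hgM hper hh,
    ← smul_eq_mul, ← setIntegral_const, ← integral_sub hF_int hB_int]
  refine norm_setIntegral_le_of_norm_le_const hYfin.lt_top fun t ht => ?_
  rw [← hF t]
  exact (norm_integral_mul_comp_add_sub_le hw hgm hgM (hh.add_const t) (hεY t ht).1).trans
    (by gcongr; exacts [(norm_nonneg _).trans (hgM 0 0), (hεY t ht).2])

theorem tendsto_measureReal_mul_integral_mul_comp_inv_smul (hY : IsAddFundamentalDomain Λ Y μ)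
    (hYb : IsBounded Y) (hw : Integrable w μ) (hgm : Measurable (uncurry g))
    (hgM : ∀ x y, ‖g x y‖ ≤ M) (hgu : UniformEquicontinuous (flip g))
    (hper : ∀ v ∈ Λ, ∀ x y, g x (v + y) = g x y) :
    Tendsto (fun ε : ℝ => μ.real Y * ∫ x, w x * g x (ε⁻¹ • x) ∂μ) (𝓝[>] 0)
      (𝓝 (∫ x, w x * ∫ y in Y, g x y ∂μ ∂μ)) := by
  have h_small : ∀ η > 0, ∀ᶠ s in 𝓝 (0 : E),
      (∀ x y, ‖g (x + s) y - g x y‖ ≤ η) ∧ ∫ x, ‖w (x + s) - w x‖ ∂μ ≤ η := fun η hη => by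
    obtain ⟨δ, hδ, hδη⟩ := Metric.uniformEquicontinuous_iff.1 hgu η hη
    filter_upwards [Metric.ball_mem_nhds 0 hδ,
      (tendsto_order.1 hw.tendsto_integral_norm_comp_add_sub).2 η hη] with s hs hws
    refine ⟨fun x y => ?_, hws.le⟩
    rw [← dist_eq_norm]
    exact (hδη (x + s) x (by simpa [dist_eq_norm] using hs) y).le
  rw [Metric.tendsto_nhds]
  intro e he
  set c := (∫ x, ‖w x‖ ∂μ + M) * μ.real Y
  have hc : 0 ≤ c :=
    mul_nonneg (add_nonneg (integral_nonneg fun _ => norm_nonneg _)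
      ((norm_nonneg _).trans (hgM 0 0))) measureReal_nonneg
  filter_upwards [self_mem_nhdsWithin, nhdsWithin_le_nhds
    (hYb.eventually_forall_smul (h_small (e / (c + 1)) (by positivity)))] with ε hε hεY
  calc _ ≤ _ := dist_measureReal_mul_integral_mul_comp_inv_smul_le hY hYb.measure_lt_top.ne hw
        hgm hgM hper (ne_of_gt hε) hεY
    _ = e / (c + 1) * c := by ring
    _ < e := by rw [div_mul_eq_mul_div, div_lt_iff₀ (by positivity)]; linarith

end Homogenization

theorem ZSpan.apply_fract_of_periodic {E ι α : Type*} [NormedAddCommGroup E] [NormedSpace ℝ E]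
    [Fintype ι] {b : Module.Basis ι ℝ E} {f : E → α}
    (hf : ∀ v ∈ Submodule.span ℤ (Set.range b), ∀ y, f (v + y) = f y) (y : E) :
    f (ZSpan.fract b y) = f y := by
  rw [← hf _ (ZSpan.floor b y).2, ZSpan.fract_apply, add_sub_cancel]

section EuclideanLattice

variable {ι : Type*} [Fintype ι]

theorem EuclideanSpace.fundamentalDomain_basisFun :
    ZSpan.fundamentalDomain (EuclideanSpace.basisFun ι ℝ).toBasis =
      {y | ∀ i, y i ∈ Set.Ico (0 : ℝ) 1} := by
  ext y; simp [ZSpan.mem_fundamentalDomain]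

theorem EuclideanSpace.volume_real_fundamentalDomain_basisFun :
    volume.real (ZSpan.fundamentalDomain (EuclideanSpace.basisFun ι ℝ).toBasis) = 1 := by
  rw [measureReal_def, measure_congr (ZSpan.fundamentalDomain_ae_parallelepiped _ volume),
    OrthonormalBasis.coe_toBasis, OrthonormalBasis.volume_parallelepiped, ENNReal.toReal_one]

theorem EuclideanSpace.exists_eq_of_mem_span_basisFun {v : EuclideanSpace ℝ ι}
    (hv : v ∈ Submodule.span ℤ (Set.range (EuclideanSpace.basisFun ι ℝ).toBasis)) :
    ∃ k : ι → ℤ, v = (WithLp.equiv 2 (ι → ℝ)).symm (fun i => (k i : ℝ)) := by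
  choose k hk using (Module.Basis.mem_span_iff_repr_mem ℤ _ v).1 hv
  exact ⟨k, by ext i; simpa using (hk i).symm⟩

end EuclideanLattice

/-- Mean-value property of rapidly oscillating periodic functions: for `ψ ∈ C_c(ℝⁿ × ℝⁿ)`
which is `Y`-periodic in its second variable,
`∫_Ω |ψ(x, x/ε)|^p dx → ∫_Ω ∫_Y |ψ(x,y)|^p dy dx` as `ε → 0⁺`. -/
theorem stmt11 (n : ℕ) (Ω : Set (EuclideanSpace ℝ (Fin n)))
    (hΩb : Bornology.IsBounded Ω) (hΩm : MeasurableSet Ω)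
    (p : ℝ) (hp1 : 1 ≤ p)
    (ψ : EuclideanSpace ℝ (Fin n) → EuclideanSpace ℝ (Fin n) → ℝ)
    (hψc : Continuous fun q : EuclideanSpace ℝ (Fin n) × EuclideanSpace ℝ (Fin n) =>
      ψ q.1 q.2)
    (hψs : ∃ K : Set (EuclideanSpace ℝ (Fin n)), IsCompact K ∧
      ∀ x ∉ K, ∀ y, ψ x y = 0)
    (hper : ∀ x y (k : Fin n → ℤ),
      ψ x (y + (WithLp.equiv 2 (Fin n → ℝ)).symm (fun i => (k i : ℝ))) = ψ x y) :
    Tendsto (fun ε : ℝ => ∫ x in Ω, |ψ x (ε⁻¹ • x)| ^ p)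
      (nhdsWithin 0 (Set.Ioi 0))
      (nhds (∫ x in Ω,
        ∫ y in {y : EuclideanSpace ℝ (Fin n) | ∀ i, y i ∈ Set.Ico (0:ℝ) 1},
          |ψ x y| ^ p)) := by
  obtain ⟨K, hK, hψK⟩ := hψs
  set b := (EuclideanSpace.basisFun (Fin n) ℝ).toBasis
  set g := fun x y => |ψ x y| ^ p
  have hg : Continuous (uncurry g) := hψc.abs.rpow_const fun _ => Or.inr (by linarith)
  have hgK : ∀ x ∉ K, ∀ y, g x y = 0 := fun x hx y => by
    simp [g, hψK x hx y, Real.zero_rpow (by linarith : p ≠ 0)]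
  have hg_per : ∀ v ∈ (Submodule.span ℤ (Set.range b)).toAddSubgroup, ∀ x y,
      g x (v + y) = g x y := fun v hv x y => by
    obtain ⟨k, rfl⟩ := EuclideanSpace.exists_eq_of_mem_span_basisFun hv
    simp only [g, add_comm _ y, hper]
  have hg_rep : ∀ y, ∃ y' ∈ closure (ZSpan.fundamentalDomain b), ∀ x, g x y = g x y' := fun y =>
    ⟨_, subset_closure (ZSpan.fract_mem_fundamentalDomain b y),
      fun x => (ZSpan.apply_fract_of_periodic (fun v hv y => hg_per v hv x y) y).symm⟩
  have hC := (ZSpan.fundamentalDomain_isBounded b).isCompact_closure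
  obtain ⟨M, hM⟩ := exists_forall_norm_le_of_compact_reps hg hK hC hgK hg_rep
  have : Countable (Submodule.span ℤ (Set.range b)).toAddSubgroup :=
    inferInstanceAs (Countable (Submodule.span ℤ (Set.range b)))
  have := tendsto_measureReal_mul_integral_mul_comp_inv_smul
    (ZSpan.isAddFundamentalDomain' b volume) (ZSpan.fundamentalDomain_isBounded b)
    (w := Ω.indicator 1)
    ((integrable_indicator_iff hΩm).2 (integrableOn_const hΩb.measure_lt_top.ne))
    hg.measurable hM (uniformEquicontinuous_flip_of_compact_reps hg hK hC hgK hg_rep) hg_per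
  rw [← EuclideanSpace.fundamentalDomain_basisFun]
  simpa only [b, g, EuclideanSpace.volume_real_fundamentalDomain_basisFun, one_mul,
    integral_indicator_one_mul hΩm] using this
end

section
/- Let Ω ⊂ ℝ³ be bounded, γ > 0, λ > 0, 3/2 < p < ∞, and ρ : Y → ℝ measurable with ρ ≥ ρ_min > 0. For w with y ↦ sup_{x∈Ω̄}|w(x,y)| in L^p(Y), define (B_{L,1} w)(x,y) = ∫_{B(x,γ) ∩ Ω} λ ((x̂−x)⊗(x̂−x)/|x̂−x|³) (∫_Y w(x̂,y') dy') dx̂. Then ρ^{-1}B_{L,1} is a bounded linear operator on this space with ‖ρ^{-1}B_{L,1} w‖ ≤ λ (∫_{B(0,γ)}|ξ|^{-1}dξ) ‖ρ^{-1}‖_{L^p(Y)} ‖w‖. -/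
/-!
For `z ∈ Ω` the cell average `∫_Y w(z, y') dy'` is bounded by `A = ∫_Y sup_x |w(x, y)| dy`,
which is at most the `L^p(Y)` norm of the supremum because `Y` has volume one and `p ≥ 1`.
The kernel obeys `|(ξ ⊗ ξ / |ξ|³) v| ≤ |v| / |ξ|`, and `|ξ|⁻¹` is integrable near the origin
in dimension three, so `|B_{L,1} w (x, y)| ≤ λ A ∫_{B(0,γ)} |ξ|⁻¹ dξ` uniformly in `x` and `y`.
Taking the `L^p` norm in `y` then only sees the factor `ρ(y)⁻¹`.
-/

open MeasureTheory Real Metric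
open scoped ENNReal

section Suprema

variable {ι : Type*} {s : Set ι} {f : ι → ℝ}

theorem le_biSup_of_bddAbove_image (hf : BddAbove (f '' s)) {c : ι} (hc : c ∈ s) :
    f c ≤ ⨆ i ∈ s, f i :=
  le_ciSup₂ (f := fun i (_ : i ∈ s) => f i) (by
    rwa [show (⋃ i, Set.range fun (_ : i ∈ s) => f i) = f '' s by ext; simp]) c hc

theorem norm_biSup_norm_le {ι E : Type*} [SeminormedAddCommGroup E] {s : Set ι} {F : ι → E}
    {c : ℝ} (hc : 0 ≤ c) (h : ∀ i ∈ s, ‖F i‖ ≤ c) : ‖⨆ i ∈ s, ‖F i‖‖ ≤ c := by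
  rw [Real.norm_of_nonneg (Real.iSup_nonneg fun i => Real.iSup_nonneg fun _ => norm_nonneg _)]
  exact Real.iSup_le (fun i => Real.iSup_le (h i) hc) hc

end Suprema

section Restrict

variable {α E : Type*} [MeasurableSpace α] {μ : Measure α} [NormedAddCommGroup E]

/-- Unlike `ae_restrict_of_forall_mem`, this needs no measurability of `s`: it is traded for
measurability of `g` and of a representative of `f`. -/
theorem ae_restrict_norm_le_of_forall_mem {s : Set α} {f : α → E} {g : α → ℝ}
    (hf : AEStronglyMeasurable f (μ.restrict s)) (hg : Measurable g)
    (h : ∀ x ∈ s, ‖f x‖ ≤ g x) : ∀ᵐ x ∂μ.restrict s, ‖f x‖ ≤ g x := by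
  have hmk : ∀ᵐ x ∂μ.restrict s, ‖hf.mk f x‖ ≤ g x := by
    rw [ae_restrict_iff (measurableSet_le hf.stronglyMeasurable_mk.norm.measurable hg), ae_iff]
    refine measure_mono_null (t := {x | f x ≠ hf.mk f x} ∩ s) ?_ ?_
    · intro x hx
      obtain ⟨hxs, hlt⟩ := Classical.not_imp.1 hx
      exact ⟨fun heq => hlt (heq ▸ h x hxs), hxs⟩
    · exact le_antisymm ((Measure.le_restrict_apply _ _).trans (ae_iff.1 hf.ae_eq_mk).le) bot_le
  filter_upwards [hmk, hf.ae_eq_mk] with x hx hfx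
  rwa [hfx]

variable [NormedSpace ℝ E]

theorem norm_setIntegral_le_of_forall_mem_norm_le {s : Set α} {f : α → E} {g : α → ℝ}
    (hg : IntegrableOn g s μ) (hgm : Measurable g) (h : ∀ x ∈ s, ‖f x‖ ≤ g x) :
    ‖∫ x in s, f x ∂μ‖ ≤ ∫ x in s, g x ∂μ := by
  by_cases hf : IntegrableOn f s μ
  · exact norm_integral_le_of_norm_le hg (ae_restrict_norm_le_of_forall_mem hf.1 hgm h)
  · have hg0 : ∀ᵐ x ∂μ.restrict s, ‖(0 : E)‖ ≤ g x :=
      ae_restrict_norm_le_of_forall_mem aestronglyMeasurable_const hgm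
        fun x hx => by simpa using (norm_nonneg (f x)).trans (h x hx)
    rw [integral_undef hf, norm_zero]
    exact integral_nonneg_of_ae (hg0.mono fun x hx => by simpa using hx)

end Restrict

theorem norm_inv_norm_pow_three_smul_inner_smul_le {E : Type*} [NormedAddCommGroup E]
    [InnerProductSpace ℝ E] (v u : E) :
    ‖(‖v‖ ^ 3)⁻¹ • (inner ℝ v u • v)‖ ≤ ‖v‖⁻¹ * ‖u‖ := by
  rw [norm_smul, norm_smul, norm_inv, norm_pow, norm_norm, Real.norm_eq_abs]
  calc (‖v‖ ^ 3)⁻¹ * (|inner ℝ v u| * ‖v‖) ≤ (‖v‖ ^ 3)⁻¹ * (‖v‖ * ‖u‖ * ‖v‖) := by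
        gcongr; exact abs_real_inner_le_norm v u
    _ = ‖v‖⁻¹ * ‖u‖ := by
        rcases eq_or_ne ‖v‖ 0 with hv | hv
        · simp [hv]
        · field_simp

theorem preimage_sub_right_ball {E : Type*} [SeminormedAddCommGroup E] (x : E) (r : ℝ) :
    (fun z => z - x) ⁻¹' ball 0 r = ball x r := by
  ext z; simp [dist_eq_norm]

section Translation

variable {E F : Type*} [NormedAddCommGroup E] [MeasurableSpace E] [BorelSpace E]
  [NormedAddCommGroup F] {μ : Measure E} [μ.IsAddRightInvariant]

theorem integrableOn_ball_comp_sub_iff {f : E → F} (x : E) (r : ℝ) :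
    IntegrableOn (fun z => f (z - x)) (ball x r) μ ↔ IntegrableOn f (ball 0 r) μ := by
  rw [← preimage_sub_right_ball]
  exact (measurePreserving_sub_right μ x).integrableOn_comp_preimage
    (MeasurableEquiv.subRight x).measurableEmbedding

theorem setIntegral_ball_comp_sub [NormedSpace ℝ F] (f : E → F) (x : E) (r : ℝ) :
    ∫ z in ball x r, f (z - x) ∂μ = ∫ ξ in ball 0 r, f ξ ∂μ := by
  rw [← preimage_sub_right_ball]
  exact (measurePreserving_sub_right μ x).setIntegral_preimage_emb
    (MeasurableEquiv.subRight x).measurableEmbedding f _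

end Translation

section Kernel

variable {E : Type*} [NormedAddCommGroup E] [InnerProductSpace ℝ E] [FiniteDimensional ℝ E]
  [MeasurableSpace E] [BorelSpace E] {μ : Measure E} [μ.IsAddHaarMeasure]

theorem integrableOn_ball_inv_norm (hd : 1 < Module.finrank ℝ E) (r : ℝ) :
    IntegrableOn (fun ξ : E => ‖ξ‖⁻¹) (ball 0 r) μ :=
  integrableOn_ball_of_norm_le_rpow (C := 1) (α := 1) hd.le (by exact_mod_cast hd)
    (ae_of_all _ fun ξ => by simp [Real.rpow_neg_one]) measurable_norm.inv.aestronglyMeasurable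

theorem norm_setIntegral_ball_inter_kernel_le (hd : 1 < Module.finrank ℝ E) {lam A : ℝ}
    (hlam : 0 ≤ lam) (hA : 0 ≤ A) {Ω : Set E} {V : E → E} (hV : ∀ z ∈ Ω, ‖V z‖ ≤ A)
    (x : E) (r : ℝ) :
    ‖∫ z in ball x r ∩ Ω, lam • ((‖z - x‖ ^ 3)⁻¹ • (inner ℝ (z - x) (V z) • (z - x))) ∂μ‖
      ≤ lam * A * ∫ ξ in ball 0 r, ‖ξ‖⁻¹ ∂μ := by
  have hint : IntegrableOn (fun z => lam * A * ‖z - x‖⁻¹) (ball x r) μ :=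
    ((integrableOn_ball_comp_sub_iff x r).2 (integrableOn_ball_inv_norm hd r)).const_mul _
  calc _ ≤ ∫ z in ball x r ∩ Ω, lam * A * ‖z - x‖⁻¹ ∂μ := by
        refine norm_setIntegral_le_of_forall_mem_norm_le (hint.mono_set Set.inter_subset_left)
          (by fun_prop) fun z hz => ?_
        rw [norm_smul, Real.norm_of_nonneg hlam, mul_assoc, mul_comm A]
        gcongr
        exact (norm_inv_norm_pow_three_smul_inner_smul_le _ _).trans
          (mul_le_mul_of_nonneg_left (hV z hz.2) (by positivity))
    _ ≤ ∫ z in ball x r, lam * A * ‖z - x‖⁻¹ ∂μ :=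
        setIntegral_mono_set hint (ae_of_all _ fun z => by positivity)
          Set.inter_subset_left.eventuallyLE
    _ = lam * A * ∫ ξ in ball 0 r, ‖ξ‖⁻¹ ∂μ := by
        rw [integral_const_mul, setIntegral_ball_comp_sub (fun ξ => ‖ξ‖⁻¹)]

end Kernel

theorem enorm_integral_le_eLpNorm {α E : Type*} [MeasurableSpace α] {μ : Measure α}
    [IsProbabilityMeasure μ] [NormedAddCommGroup E] [NormedSpace ℝ E] {p : ℝ≥0∞}
    (hp : 1 ≤ p) {f : α → E} (hf : AEStronglyMeasurable f μ) :
    ‖∫ x, f x ∂μ‖ₑ ≤ eLpNorm f p μ :=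
  calc ‖∫ x, f x ∂μ‖ₑ ≤ ∫⁻ x, ‖f x‖ₑ ∂μ := enorm_integral_le_lintegral_enorm f
    _ = eLpNorm f 1 μ := eLpNorm_one_eq_lintegral_enorm.symm
    _ ≤ eLpNorm f p μ := eLpNorm_le_eLpNorm_of_exponent_le hp hf

instance isProbabilityMeasure_restrict_unitCube (ι : Type*) [Fintype ι] :
    IsProbabilityMeasure
      (volume.restrict {y : EuclideanSpace ℝ ι | ∀ i, y i ∈ Set.Ico (0 : ℝ) 1}) := by
  have hcube : {y : EuclideanSpace ℝ ι | ∀ i, y i ∈ Set.Ico (0 : ℝ) 1} =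
      WithLp.ofLp ⁻¹' Set.univ.pi fun _ => Set.Ico (0 : ℝ) 1 := by
    ext y; simp
  constructor
  rw [Measure.restrict_apply_univ, hcube, (PiLp.volume_preserving_ofLp ι).measure_preimage
    (MeasurableSet.univ_pi fun _ => measurableSet_Ico).nullMeasurableSet, volume_pi_pi]
  simp [Real.volume_Ico]

theorem stmt16_general (Ω : Set (EuclideanSpace ℝ (Fin 3)))
    (lam γ : ℝ) (hlam : 0 < lam)
    (ρ : EuclideanSpace ℝ (Fin 3) → ℝ)
    (p : ℝ) (hp : 3 / 2 < p)
    (w : EuclideanSpace ℝ (Fin 3) → EuclideanSpace ℝ (Fin 3) → EuclideanSpace ℝ (Fin 3))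
    (hbdd : ∀ y, BddAbove ((fun x => ‖w x y‖) '' Ω))
    (hsup : MemLp (fun y => ⨆ x ∈ Ω, ‖w x y‖) (ENNReal.ofReal p)
      (volume.restrict {y : EuclideanSpace ℝ (Fin 3) | ∀ i, y i ∈ Set.Ico (0:ℝ) 1})) :
    eLpNorm (fun y => ⨆ x ∈ Ω,
        ‖(ρ y)⁻¹ • ∫ z in Metric.ball x γ ∩ Ω,
          lam • ((‖z - x‖ ^ 3)⁻¹ •
            ((inner ℝ (z - x)
              (∫ y' in {y' : EuclideanSpace ℝ (Fin 3) | ∀ i, y' i ∈ Set.Ico (0:ℝ) 1},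
                w z y') : ℝ) • (z - x)))‖)
      (ENNReal.ofReal p)
      (volume.restrict {y : EuclideanSpace ℝ (Fin 3) | ∀ i, y i ∈ Set.Ico (0:ℝ) 1})
      ≤ ENNReal.ofReal
          (lam * ∫ ξ in Metric.ball (0 : EuclideanSpace ℝ (Fin 3)) γ, ‖ξ‖⁻¹) *
        eLpNorm (fun y => (ρ y)⁻¹) (ENNReal.ofReal p)
          (volume.restrict {y : EuclideanSpace ℝ (Fin 3) | ∀ i, y i ∈ Set.Ico (0:ℝ) 1}) *
        eLpNorm (fun y => ⨆ x ∈ Ω, ‖w x y‖) (ENNReal.ofReal p)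
          (volume.restrict {y : EuclideanSpace ℝ (Fin 3) | ∀ i, y i ∈ Set.Ico (0:ℝ) 1}) := by
  set Y := {y : EuclideanSpace ℝ (Fin 3) | ∀ i, y i ∈ Set.Ico (0:ℝ) 1}
  set g := fun y => ⨆ x ∈ Ω, ‖w x y‖
  set A := ∫ y in Y, g y
  set I := ∫ ξ in ball (0 : EuclideanSpace ℝ (Fin 3)) γ, ‖ξ‖⁻¹
  have hp1 : 1 ≤ ENNReal.ofReal p := ENNReal.one_le_ofReal.2 (by linarith)
  have hg : Integrable g (volume.restrict Y) := hsup.integrable hp1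
  have hA : 0 ≤ A := integral_nonneg fun y => Real.iSup_nonneg fun x =>
    Real.iSup_nonneg fun _ => norm_nonneg _
  have hI : 0 ≤ I := integral_nonneg fun ξ => by positivity
  have hV : ∀ z ∈ Ω, ‖∫ y' in Y, w z y'‖ ≤ A := fun z hz =>
    (norm_integral_le_integral_norm _).trans <| integral_mono_of_nonneg
      (ae_of_all _ fun _ => norm_nonneg _) hg
      (ae_of_all _ fun y => le_biSup_of_bddAbove_image (hbdd y) hz)
  calc _ ≤ eLpNorm ((lam * A * I) • fun y => (ρ y)⁻¹) (ENNReal.ofReal p) (volume.restrict Y) :=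
        eLpNorm_mono fun y => norm_biSup_norm_le (norm_nonneg _) fun x _ => by
          rw [norm_smul, Pi.smul_apply, norm_smul, mul_comm ‖lam * A * I‖,
            Real.norm_of_nonneg (by positivity : 0 ≤ lam * A * I)]
          gcongr
          exact norm_setIntegral_ball_inter_kernel_le (by simp) hlam.le hA hV x γ
    _ = ‖lam * I‖ₑ * eLpNorm (fun y => (ρ y)⁻¹) (ENNReal.ofReal p) (volume.restrict Y) *
          ‖A‖ₑ := by
        rw [eLpNorm_const_smul, mul_right_comm lam, enorm_mul]
        ring
    _ ≤ _ := by
        rw [Real.enorm_eq_ofReal (by positivity)]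
        gcongr
        exact enorm_integral_le_eLpNorm hp1 hsup.1

/-- Boundedness estimate (3.40) for the long-range component of the two-scale
peridynamic operator (Lemma 3.8(a)): with `‖w‖ = (∫_Y sup_{x∈Ω̄}|w(x,y)|^p dy)^{1/p}`,
`‖ρ⁻¹B_{L,1} w‖ ≤ λ (∫_{B(0,γ)}|ξ|⁻¹dξ) ‖ρ⁻¹‖_{L^p(Y)} ‖w‖`. -/
theorem stmt16 (Ω : Set (EuclideanSpace ℝ (Fin 3))) (hΩb : Bornology.IsBounded Ω)
    (lam γ ρmin : ℝ) (hlam : 0 < lam) (hγ : 0 < γ) (hρmin : 0 < ρmin)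
    (ρ : EuclideanSpace ℝ (Fin 3) → ℝ) (hρ : ∀ y, ρmin ≤ ρ y)
    (p : ℝ) (hp : 3 / 2 < p)
    (w : EuclideanSpace ℝ (Fin 3) → EuclideanSpace ℝ (Fin 3) → EuclideanSpace ℝ (Fin 3))
    (hbdd : ∀ y, BddAbove ((fun x => ‖w x y‖) '' Ω))
    (hsup : MemLp (fun y => ⨆ x ∈ Ω, ‖w x y‖) (ENNReal.ofReal p)
      (volume.restrict {y : EuclideanSpace ℝ (Fin 3) | ∀ i, y i ∈ Set.Ico (0:ℝ) 1})) :
    eLpNorm (fun y => ⨆ x ∈ Ω,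
        ‖(ρ y)⁻¹ • ∫ z in Metric.ball x γ ∩ Ω,
          lam • ((‖z - x‖ ^ 3)⁻¹ •
            ((inner ℝ (z - x)
              (∫ y' in {y' : EuclideanSpace ℝ (Fin 3) | ∀ i, y' i ∈ Set.Ico (0:ℝ) 1},
                w z y') : ℝ) • (z - x)))‖)
      (ENNReal.ofReal p)
      (volume.restrict {y : EuclideanSpace ℝ (Fin 3) | ∀ i, y i ∈ Set.Ico (0:ℝ) 1})
      ≤ ENNReal.ofReal
          (lam * ∫ ξ in Metric.ball (0 : EuclideanSpace ℝ (Fin 3)) γ, ‖ξ‖⁻¹) *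
        eLpNorm (fun y => (ρ y)⁻¹) (ENNReal.ofReal p)
          (volume.restrict {y : EuclideanSpace ℝ (Fin 3) | ∀ i, y i ∈ Set.Ico (0:ℝ) 1}) *
        eLpNorm (fun y => ⨆ x ∈ Ω, ‖w x y‖) (ENNReal.ofReal p)
          (volume.restrict {y : EuclideanSpace ℝ (Fin 3) | ∀ i, y i ∈ Set.Ico (0:ℝ) 1}) :=
  stmt16_general Ω lam γ hlam ρ p hp w hbdd hsup
end
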